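/- For all real constants C1, C2 ≥ 0, every δ ∈ (0,1), and every integer i ≥ 0, it holds that 22·S(2^{i+1}, δ) ≤ 16·S(2^i, δ). -/
import Mathlib


/-- `S(r, δ) = C_{F,δ}/√r + C2·√(2·ln(log₂ r + 10)/r)` where
`C_{F,δ} = C1 + C2·√(2·ln(π²/(6δ)))`. -/
noncomputable def Sfun (C1 C2 r δ : ℝ) : ℝ :=
  (C1 + C2 * Real.sqrt (2 * Real.log (Real.pi ^ 2 / (6 * δ)))) / Real.sqrt r
    + C2 * Real.sqrt (2 * Real.log (Real.logb 2 r + 10) / r)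

lemma key_log (i : ℕ) : 484 * Real.log ((i : ℝ) + 11) ≤ 512 * Real.log ((i : ℝ) + 10) := by
  have hi : (0:ℝ) ≤ (i:ℝ) := Nat.cast_nonneg i
  have h10 : (0:ℝ) < (i:ℝ) + 10 := by linarith
  have h11 : (0:ℝ) < (i:ℝ) + 11 := by linarith
  have hlog10 : (2:ℝ) ≤ Real.log ((i:ℝ) + 10) := by
    rw [Real.le_log_iff_exp_le h10]
    have h2 : Real.exp 2 = Real.exp 1 * Real.exp 1 := by
      rw [← Real.exp_add]; norm_num
    have := Real.exp_one_lt_d9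
    have hpos := Real.exp_pos 1
    nlinarith
  have hdiff : Real.log ((i:ℝ) + 11) - Real.log ((i:ℝ) + 10) ≤ 1/10 := by
    rw [← Real.log_div h11.ne' h10.ne']
    have h1 := Real.log_le_sub_one_of_pos (show (0:ℝ) < ((i:ℝ)+11)/((i:ℝ)+10) by positivity)
    have h2 : ((i:ℝ)+11)/((i:ℝ)+10) - 1 = 1/((i:ℝ)+10) := by
      field_simp
      norm_num
    have h3 : 1/((i:ℝ)+10) ≤ 1/10 := by
      apply div_le_div_of_nonneg_left (by norm_num) (by norm_num) (by linarith)
    linarith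
  linarith

/-- `22·S(2^{i+1}, δ) ≤ 16·S(2^i, δ)`. -/
theorem stmt4 (C1 C2 : ℝ) (hC1 : 0 ≤ C1) (hC2 : 0 ≤ C2)
    (δ : ℝ) (hδ0 : 0 < δ) (hδ1 : δ < 1) (i : ℕ) :
    22 * Sfun C1 C2 (2 ^ (i + 1) : ℝ) δ ≤ 16 * Sfun C1 C2 (2 ^ i : ℝ) δ := by
  have hA : 0 ≤ C1 + C2 * Real.sqrt (2 * Real.log (Real.pi ^ 2 / (6 * δ))) :=
    add_nonneg hC1 (mul_nonneg hC2 (Real.sqrt_nonneg _))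
  set A := C1 + C2 * Real.sqrt (2 * Real.log (Real.pi ^ 2 / (6 * δ))) with hAdef
  have hp : (0:ℝ) < 2 ^ i := by positivity
  have hsp : (0:ℝ) < Real.sqrt (2 ^ i) := Real.sqrt_pos.mpr hp
  have hlb : ∀ n : ℕ, Real.logb 2 ((2:ℝ) ^ n) = n := by
    intro n
    rw [Real.logb_pow]
    simp
  unfold Sfun
  rw [hlb, hlb]
  have hps : Real.sqrt ((2:ℝ) ^ (i+1)) = Real.sqrt 2 * Real.sqrt (2^i) := by
    rw [pow_succ, mul_comm ((2:ℝ)^i) 2, Real.sqrt_mul (by norm_num)]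
  have hterm1 : 22 * (A / Real.sqrt ((2:ℝ) ^ (i+1))) ≤ 16 * (A / Real.sqrt ((2:ℝ) ^ i)) := by
    rw [hps]
    have hs2 : (1.4:ℝ) ≤ Real.sqrt 2 := by
      rw [show (1.4:ℝ) = Real.sqrt (1.4^2) by rw [Real.sqrt_sq (by norm_num)]]
      exact Real.sqrt_le_sqrt (by norm_num)
    have hs2pos : (0:ℝ) < Real.sqrt 2 := by linarith
    rw [mul_div_assoc', mul_div_assoc', div_le_div_iff₀ (by positivity) hsp]
    nlinarith [mul_nonneg (mul_nonneg hA hsp.le) hsp.le]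
  have hterm2 : 22 * (C2 * Real.sqrt (2 * Real.log ((i+1 : ℕ) + 10) / 2 ^ (i+1)))
      ≤ 16 * (C2 * Real.sqrt (2 * Real.log ((i : ℕ) + 10) / 2 ^ i)) := by
    have hc : ((i+1 : ℕ) : ℝ) + 10 = (i : ℝ) + 11 := by push_cast; ring
    rw [hc]
    have hlognn : 0 ≤ Real.log ((i:ℝ) + 11) :=
      Real.log_nonneg (by have := (Nat.cast_nonneg i : (0:ℝ) ≤ i); linarith)
    have hx : (0:ℝ) ≤ 2 * Real.log ((i:ℝ) + 11) / 2 ^ (i+1) := by positivity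
    have hkey := key_log i
    have hsq : 484 * (2 * Real.log ((i:ℝ) + 11) / 2 ^ (i+1))
        ≤ 256 * (2 * Real.log ((i:ℝ) + 10) / 2 ^ i) := by
      rw [pow_succ, mul_div_assoc', mul_div_assoc',
        div_le_div_iff₀ (by positivity) (by positivity)]
      nlinarith [mul_le_mul_of_nonneg_right hkey hp.le]
    have h22 : (22:ℝ) * Real.sqrt (2 * Real.log ((i:ℝ) + 11) / 2 ^ (i+1))
        = Real.sqrt (484 * (2 * Real.log ((i:ℝ) + 11) / 2 ^ (i+1))) := by
      rw [Real.sqrt_mul (by norm_num), show (484:ℝ) = 22^2 by norm_num,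
        Real.sqrt_sq (by norm_num)]
    have h16 : (16:ℝ) * Real.sqrt (2 * Real.log ((i:ℝ) + 10) / 2 ^ i)
        = Real.sqrt (256 * (2 * Real.log ((i:ℝ) + 10) / 2 ^ i)) := by
      rw [Real.sqrt_mul (by norm_num), show (256:ℝ) = 16^2 by norm_num,
        Real.sqrt_sq (by norm_num)]
    calc 22 * (C2 * Real.sqrt (2 * Real.log ((i:ℝ) + 11) / 2 ^ (i+1)))
        = C2 * (22 * Real.sqrt (2 * Real.log ((i:ℝ) + 11) / 2 ^ (i+1))) := by ring
      _ ≤ C2 * (16 * Real.sqrt (2 * Real.log ((i:ℝ) + 10) / 2 ^ i)) := by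
          apply mul_le_mul_of_nonneg_left _ hC2
          rw [h22, h16]
          exact Real.sqrt_le_sqrt hsq
      _ = 16 * (C2 * Real.sqrt (2 * Real.log ((i:ℝ) + 10) / 2 ^ i)) := by ring
  push_cast at hterm2 ⊢
  rw [mul_add, mul_add]
  exact add_le_add hterm1 hterm2
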